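/- arXiv:2605.13943 — 4 statements merged into one kernel-verified Lean document; each statement's English description precedes it below -/
import Mathlib

section
/- Let q ≥ 1 and n > 2q + 3. Let D = (d_{ij}) be a symmetric n×n real matrix with nonnegative entries, zero diagonal, and rank(D) ≤ q + 2. Set w_{ij} = exp(-d_{ij}) and, for z_1,…,z_n ∈ ℝ^q, let S_Z have entries s_{ij} = -‖z_i - z_j‖². Then there exist z_1,…,z_n ∈ ℝ^q with L_W(S_Z) = H(W) if and only if there exist points p_1,…,p_n ∈ ℝ^q with ‖p_i - p_j‖² = d_{ij} for all i, j. Moreover, every embedding Z attaining the bound satisfies ‖z_i - z_j‖² = d_{ij} for all i, j, and any two embeddings Z, Z' attaining the bound differ by a Euclidean isometry: there is an isometry f of ℝ^q with z'_i = f(z_i) for all i. -/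
open scoped BigOperators

/-- The weighted InfoNCE loss. -/
noncomputable def infoNCE {n : ℕ} (W S : Matrix (Fin n) (Fin n) ℝ) : ℝ :=
  -(1 / (n : ℝ)) * ∑ i : Fin n, ∑ j ∈ Finset.univ.erase i,
    (W i j / ∑ k ∈ Finset.univ.erase i, W i k) *
      Real.log (Real.exp (S i j) / ∑ k ∈ Finset.univ.erase i, Real.exp (S i k))

/-- The entropic lower bound (with the convention `0 * log 0 = 0`,
which holds automatically since `Real.log 0 = 0`). -/
noncomputable def entropicBound {n : ℕ} (W : Matrix (Fin n) (Fin n) ℝ) : ℝ :=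
  -(1 / (n : ℝ)) * ∑ i : Fin n, ∑ j ∈ Finset.univ.erase i,
    (W i j / ∑ k ∈ Finset.univ.erase i, W i k) *
      Real.log (W i j / ∑ k ∈ Finset.univ.erase i, W i k)


/-- Weight matrix `w_{ij} = exp(-d_{ij})`. -/
noncomputable def Wexp {n : ℕ} (D : Matrix (Fin n) (Fin n) ℝ) : Matrix (Fin n) (Fin n) ℝ :=
  Matrix.of fun i j => Real.exp (-(D i j))

/-- Latent similarity matrix `s_{ij} = -‖z_i - z_j‖²`. -/
noncomputable def SEucl {n q : ℕ} (z : Fin n → EuclideanSpace ℝ (Fin q)) :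
    Matrix (Fin n) (Fin n) ℝ :=
  Matrix.of fun i j => -‖z i - z j‖ ^ 2

/-!
By Gibbs' inequality the InfoNCE loss exceeds the entropic bound by an average of row-wise
Kullback–Leibler divergences, so the bound is attained exactly when every off-diagonal row of
`exp S` normalizes to the corresponding row of `W`. For `W = exp (-D)` and `S = S_Z` this says
`‖z_i - z_j‖² = d_ij - c_i` for `i ≠ j`, and symmetry forces `c_i = c` to be a constant.

Then `D = E + c (J - I)`, where `E` is the squared-distance matrix of `Z`. On the subspace of
vectors `v` with `∑ v_i = 0` and `∑ v_i z_i = 0`, of codimension at most `q + 1`, the quadratic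
form of `E` vanishes, so that of `D` is `-c ‖v‖²`. If `c ≠ 0`, `D` is injective on this subspace
and `n - q - 1 ≤ rank D ≤ q + 2`, contradicting `n > 2q + 3`. So `c = 0` and `Z` realizes `D`.
Two realizations have equal Gram matrices once a common point is moved to the origin, hence
differ by an isometry.
-/

open Finset Real Module Matrix InformationTheory
open scoped Congruent

section Gibbs

variable {ι : Type*} (t : Finset ι) {p q : ι → ℝ}

lemma sum_mul_log_sub_sum_mul_log_eq_sum_klFun (hp : ∀ j ∈ t, 0 < p j) (hq : ∀ j ∈ t, 0 < q j)
    (hsum : ∑ j ∈ t, p j = ∑ j ∈ t, q j) :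
    ∑ j ∈ t, p j * log (p j) - ∑ j ∈ t, p j * log (q j) =
      ∑ j ∈ t, q j * klFun (p j / q j) := by
  have hterm : ∀ j ∈ t, q j * klFun (p j / q j) =
      p j * log (p j) - p j * log (q j) + (q j - p j) := fun j hj => by
    have := (hq j hj).ne'
    rw [klFun_apply, log_div (hp j hj).ne' this]
    field_simp
    ring
  rw [sum_congr rfl hterm, sum_add_distrib, sum_sub_distrib, sum_sub_distrib, hsum]
  ring

lemma sum_mul_klFun_div_nonneg (hp : ∀ j ∈ t, 0 < p j) (hq : ∀ j ∈ t, 0 < q j) :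
    0 ≤ ∑ j ∈ t, q j * klFun (p j / q j) :=
  sum_nonneg fun j hj => mul_nonneg (hq j hj).le (klFun_nonneg (div_pos (hp j hj) (hq j hj)).le)

lemma sum_mul_log_le_sum_mul_log (hp : ∀ j ∈ t, 0 < p j) (hq : ∀ j ∈ t, 0 < q j)
    (hsum : ∑ j ∈ t, p j = ∑ j ∈ t, q j) :
    ∑ j ∈ t, p j * log (q j) ≤ ∑ j ∈ t, p j * log (p j) := by
  have := sum_mul_log_sub_sum_mul_log_eq_sum_klFun t hp hq hsum
  linarith [sum_mul_klFun_div_nonneg t hp hq]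

lemma eq_of_sum_mul_log_eq_sum_mul_log (hp : ∀ j ∈ t, 0 < p j) (hq : ∀ j ∈ t, 0 < q j)
    (hsum : ∑ j ∈ t, p j = ∑ j ∈ t, q j)
    (h : ∑ j ∈ t, p j * log (q j) = ∑ j ∈ t, p j * log (p j)) {j : ι} (hj : j ∈ t) :
    p j = q j := by
  have hkl := sum_mul_log_sub_sum_mul_log_eq_sum_klFun t hp hq hsum
  rw [h, sub_self, eq_comm, sum_eq_zero_iff_of_nonneg fun j hj =>
    mul_nonneg (hq j hj).le (klFun_nonneg (div_pos (hp j hj) (hq j hj)).le)] at hkl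
  have hdiv := (klFun_eq_zero_iff (div_pos (hp j hj) (hq j hj)).le).1
    ((mul_eq_zero.1 (hkl j hj)).resolve_left (hq j hj).ne')
  exact (div_eq_one_iff_eq (hq j hj).ne').1 hdiv

end Gibbs

section OffDiagRowNormalize

variable {ι : Type*} [Fintype ι] [DecidableEq ι]

noncomputable def offDiagRowNormalize (W : Matrix ι ι ℝ) : Matrix ι ι ℝ :=
  of fun i j => W i j / ∑ k ∈ univ.erase i, W i k

variable {W : Matrix ι ι ℝ} {i : ι}

lemma offDiagRowNormalize_pos (hW : ∀ j, j ≠ i → 0 < W i j) {j : ι} (hj : j ∈ univ.erase i) :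
    0 < offDiagRowNormalize W i j :=
  div_pos (hW j (ne_of_mem_erase hj)) (sum_pos (fun k hk => hW k (ne_of_mem_erase hk)) ⟨j, hj⟩)

lemma sum_offDiagRowNormalize (hW : ∀ j, j ≠ i → 0 < W i j) (hi : (univ.erase i).Nonempty) :
    ∑ j ∈ univ.erase i, offDiagRowNormalize W i j = 1 := by
  simp only [offDiagRowNormalize, of_apply, ← sum_div]
  exact div_self (sum_pos (fun j hj => hW j (ne_of_mem_erase hj)) hi).ne'

lemma exists_forall_ne_eq_add_of_offDiagRowNormalize_map_exp_eq {A S : Matrix ι ι ℝ}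
    (hA : A.IsSymm) (hS : S.IsSymm)
    (h : ∀ i j, j ≠ i → offDiagRowNormalize (A.map exp) i j = offDiagRowNormalize (S.map exp) i j) :
    ∃ c, ∀ i j, i ≠ j → S i j = A i j + c := by
  let r i := log (∑ k ∈ univ.erase i, exp (S i k)) - log (∑ k ∈ univ.erase i, exp (A i k))
  have hrow : ∀ i j, j ≠ i → S i j = A i j + r i := fun i j hji => by
    have hj : j ∈ univ.erase i := mem_erase.2 ⟨hji, mem_univ j⟩
    have hpos : ∀ M : Matrix ι ι ℝ, 0 < ∑ k ∈ univ.erase i, exp (M i k) :=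
      fun M => sum_pos (fun _ _ => exp_pos _) ⟨j, hj⟩
    have hij := h i j hji
    simp only [offDiagRowNormalize, of_apply, map_apply,
      div_eq_div_iff (hpos A).ne' (hpos S).ne'] at hij
    have := congrArg log hij
    rw [log_mul (exp_pos _).ne' (hpos S).ne', log_mul (exp_pos _).ne' (hpos A).ne',
      log_exp, log_exp] at this
    simp only [r]
    linarith
  have hr : ∀ i j, j ≠ i → r i = r j := fun i j hji => by
    have := hrow j i hji.symm
    rw [hA.apply, hS.apply, hrow i j hji] at this
    linarith
  obtain hι | ⟨⟨i₀⟩⟩ := isEmpty_or_nonempty ι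
  · exact ⟨0, fun i => isEmptyElim i⟩
  refine ⟨r i₀, fun i j hij => ?_⟩
  rw [hrow i j hij.symm]
  rcases eq_or_ne i i₀ with rfl | hi
  · rfl
  · rw [hr i₀ i hi]

end OffDiagRowNormalize

lemma infoNCE_eq_sum_offDiagRowNormalize {n : ℕ} (W S : Matrix (Fin n) (Fin n) ℝ) :
    infoNCE W S = -(1 / (n : ℝ)) * ∑ i, ∑ j ∈ univ.erase i,
      offDiagRowNormalize W i j * log (offDiagRowNormalize (S.map exp) i j) := rfl

lemma entropicBound_eq_sum_offDiagRowNormalize {n : ℕ} (W : Matrix (Fin n) (Fin n) ℝ) :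
    entropicBound W = -(1 / (n : ℝ)) * ∑ i, ∑ j ∈ univ.erase i,
      offDiagRowNormalize W i j * log (offDiagRowNormalize W i j) := rfl

lemma infoNCE_map_exp_self {n : ℕ} (S : Matrix (Fin n) (Fin n) ℝ) :
    infoNCE (S.map exp) S = entropicBound (S.map exp) := rfl

theorem offDiagRowNormalize_eq_of_infoNCE_eq_entropicBound {n : ℕ}
    {W S : Matrix (Fin n) (Fin n) ℝ} (hW : ∀ i j, j ≠ i → 0 < W i j)
    (h : infoNCE W S = entropicBound W) (i j : Fin n) (hji : j ≠ i) :
    offDiagRowNormalize W i j = offDiagRowNormalize (S.map exp) i j := by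
  set P := offDiagRowNormalize W
  set Q := offDiagRowNormalize (S.map exp)
  have hP : ∀ i, ∀ j ∈ univ.erase i, 0 < P i j := fun i _ => offDiagRowNormalize_pos (hW i)
  have hQ : ∀ i, ∀ j ∈ univ.erase i, 0 < Q i j :=
    fun i _ => offDiagRowNormalize_pos fun _ _ => exp_pos _
  have hrow : ∀ i, (univ.erase i).Nonempty →
      ∑ j ∈ univ.erase i, P i j = ∑ j ∈ univ.erase i, Q i j := fun i hi => by
    rw [sum_offDiagRowNormalize (hW i) hi, sum_offDiagRowNormalize (fun _ _ => exp_pos _) hi]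
  let gap i := ∑ j ∈ univ.erase i, P i j * log (P i j) - ∑ j ∈ univ.erase i, P i j * log (Q i j)
  have hgap : ∀ i, 0 ≤ gap i := fun i => by
    rcases (univ.erase i).eq_empty_or_nonempty with hi | hi
    · simp only [gap, hi, sum_empty, sub_self, le_refl]
    · exact sub_nonneg.2 <| sum_mul_log_le_sum_mul_log _ (hP i) (hQ i) (hrow i hi)
  have hsum : ∑ i, gap i = 0 := by
    have hn : (n : ℝ) ≠ 0 := by have := i.pos; positivity
    rw [infoNCE_eq_sum_offDiagRowNormalize, entropicBound_eq_sum_offDiagRowNormalize] at h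
    field_simp at h
    simp only [gap, sum_sub_distrib]
    linarith
  have hi := (sum_eq_zero_iff_of_nonneg fun i _ => hgap i).1 hsum i (mem_univ i)
  have hj : j ∈ univ.erase i := mem_erase.2 ⟨hji, mem_univ j⟩
  exact eq_of_sum_mul_log_eq_sum_mul_log _ (hP i) (hQ i) (hrow i ⟨j, hj⟩)
    (by simp only [gap] at hi; linarith) hj

theorem Matrix.finrank_le_rank_of_dotProduct_mulVec_ne_zero {K ι : Type*} [Field K] [Fintype ι]
    {A : Matrix ι ι K} (V : Submodule K (ι → K)) (hV : ∀ v ∈ V, v ≠ 0 → v ⬝ᵥ A *ᵥ v ≠ 0) :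
    finrank K V ≤ A.rank := by
  refine LinearMap.finrank_le_finrank_of_injective
    (f := A.mulVecLin.rangeRestrict.domRestrict V) ?_
  rw [← LinearMap.ker_eq_bot, LinearMap.ker_eq_bot']
  intro v hv
  by_contra hne
  refine hV v v.2 (by simpa using hne) ?_
  have : A *ᵥ (v : ι → K) = 0 := by simpa [Subtype.ext_iff] using hv
  rw [this, dotProduct_zero]

section SquaredDistances

variable {ι E : Type*} [Fintype ι] [DecidableEq ι] [NormedAddCommGroup E] [InnerProductSpace ℝ E]
  {D : Matrix ι ι ℝ} {z : ι → E} {c : ℝ}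

lemma dotProduct_mulVec_eq_neg_mul_of_sum_eq_zero
    (hdiag : ∀ i, D i i = 0) (hD : ∀ i j, i ≠ j → D i j = ‖z i - z j‖ ^ 2 + c)
    {a : ι → ℝ} (ha : ∑ i, a i = 0) (haz : ∑ i, a i • z i = 0) :
    a ⬝ᵥ D *ᵥ a = -c * ∑ i, a i ^ 2 := by
  have hD' : D = of (fun i j => ‖z i - z j‖ * ‖z i - z j‖) + c • of (fun _ _ => 1) - c • 1 := by
    ext i j
    rcases eq_or_ne i j with rfl | hij
    · simp [hdiag]
    · simp [hD i j hij, hij, sq]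
  have hdist : a ⬝ᵥ (of fun i j => ‖z i - z j‖ * ‖z i - z j‖) *ᵥ a = 0 := by
    have := inner_sum_smul_sum_smul_of_sum_eq_zero z ha z ha
    rw [haz, inner_zero_left] at this
    simp only [dotProduct, mulVec, of_apply, Finset.mul_sum]
    calc _ = ∑ i, ∑ j, a i * a j * (‖z i - z j‖ * ‖z i - z j‖) :=
          sum_congr rfl fun i _ => sum_congr rfl fun j _ => by ring
      _ = 0 := by linarith
  have hones : a ⬝ᵥ (of fun _ _ => (1 : ℝ)) *ᵥ a = 0 := by
    simp [dotProduct, mulVec, ha]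
  rw [hD', sub_mulVec, add_mulVec, smul_mulVec, smul_mulVec, dotProduct_sub, dotProduct_add,
    dotProduct_smul, dotProduct_smul, hdist, hones, one_mulVec]
  simp [dotProduct, sq, Finset.mul_sum]

theorem card_le_rank_add_finrank_add_one [FiniteDimensional ℝ E] (hc : c ≠ 0)
    (hdiag : ∀ i, D i i = 0) (hD : ∀ i j, i ≠ j → D i j = ‖z i - z j‖ ^ 2 + c) :
    Fintype.card ι ≤ D.rank + finrank ℝ E + 1 := by
  let φ : (ι → ℝ) →ₗ[ℝ] ℝ × E :=
    (Fintype.linearCombination ℝ fun _ => (1 : ℝ)).prod (Fintype.linearCombination ℝ z)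
  have hker : finrank ℝ (LinearMap.ker φ) ≤ D.rank := by
    refine finrank_le_rank_of_dotProduct_mulVec_ne_zero _ fun a ha ha0 => ?_
    have hφ : ∑ i, a i = 0 ∧ ∑ i, a i • z i = 0 := by
      simpa [φ, Fintype.linearCombination_apply, Prod.ext_iff] using ha
    rw [dotProduct_mulVec_eq_neg_mul_of_sum_eq_zero hdiag hD hφ.1 hφ.2]
    refine mul_ne_zero (neg_ne_zero.2 hc) fun hsq => ha0 ?_
    ext i
    simpa using (sum_eq_zero_iff_of_nonneg fun i _ => sq_nonneg (a i)).1 hsq i (mem_univ i)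
  have hrange : finrank ℝ (LinearMap.range φ) ≤ finrank ℝ E + 1 := by
    simpa [add_comm] using (LinearMap.range φ).finrank_le
  have := φ.finrank_range_add_finrank_ker
  rw [finrank_fintype_fun_eq_card] at this
  omega

end SquaredDistances

theorem exists_linearIsometryEquiv_apply_eq_of_gram_eq {𝕜 ι E : Type*} [RCLike 𝕜] [Fintype ι]
    [NormedAddCommGroup E] [InnerProductSpace 𝕜 E] [FiniteDimensional 𝕜 E] {v v' : ι → E}
    (h : gram 𝕜 v = gram 𝕜 v') : ∃ g : E ≃ₗᵢ[𝕜] E, ∀ i, g (v i) = v' i := by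
  classical
  let L := Fintype.linearCombination 𝕜 v
  let L' := Fintype.linearCombination 𝕜 v'
  have hnorm : ∀ a, ‖L' a‖ = ‖L a‖ := fun a => by
    have := star_dotProduct_gram_mulVec (𝕜 := 𝕜) v a a
    rw [h, star_dotProduct_gram_mulVec, inner_self_eq_norm_sq_to_K,
      inner_self_eq_norm_sq_to_K] at this
    exact (pow_left_inj₀ (norm_nonneg _) (norm_nonneg _) two_ne_zero).1 (by exact_mod_cast this)
  have hker : LinearMap.ker L ≤ LinearMap.ker L' := fun a ha => by
    rwa [LinearMap.mem_ker, ← norm_eq_zero, hnorm, norm_eq_zero]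
  let σ₀ : LinearMap.range L →ₗ[𝕜] E :=
    (LinearMap.ker L).liftQ L' hker ∘ₗ L.quotKerEquivRange.symm
  have hσ₀ : ∀ a, σ₀ ⟨L a, LinearMap.mem_range_self L a⟩ = L' a := fun a => by
    simp [σ₀, LinearMap.quotKerEquivRange_symm_apply_image]
  let σ : LinearMap.range L →ₗᵢ[𝕜] E :=
    { σ₀ with
      norm_map' := by
        rintro ⟨_, a, rfl⟩
        exact (congrArg norm (hσ₀ a)).trans (hnorm a) }
  refine ⟨.ofSurjective σ.extend (LinearMap.injective_iff_surjective.1 σ.extend.injective),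
    fun i => ?_⟩
  have hext := σ.extend_apply ⟨L (Pi.single i 1), LinearMap.mem_range_self L _⟩
  have hi := hσ₀ (Pi.single i 1)
  simp only [L, L', Fintype.linearCombination_apply_single, one_smul] at hext hi
  exact hext.trans hi

theorem Congruent.exists_isometryEquiv_apply_eq {ι V P : Type*} [Fintype ι]
    [NormedAddCommGroup V] [InnerProductSpace ℝ V] [FiniteDimensional ℝ V] [MetricSpace P]
    [NormedAddTorsor V P] {z z' : ι → P} (h : z ≅ z') : ∃ f : P ≃ᵢ P, ∀ i, f (z i) = z' i := by
  obtain hι | ⟨⟨i₀⟩⟩ := isEmpty_or_nonempty ι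
  · exact ⟨.refl P, isEmptyElim⟩
  have hgram : gram ℝ (fun i => z i -ᵥ z i₀) = gram ℝ (fun i => z' i -ᵥ z' i₀) := by
    ext i j
    simp only [gram_apply, vsub_sub_vsub_cancel_right, ← dist_eq_norm_vsub,
      real_inner_eq_norm_mul_self_add_norm_mul_self_sub_norm_sub_mul_self_div_two,
      congruent_iff_dist_eq.1 h]
  obtain ⟨g, hg⟩ := exists_linearIsometryEquiv_apply_eq_of_gram_eq hgram
  refine ⟨((IsometryEquiv.vaddConst (z i₀)).symm.trans g.toIsometryEquiv).trans
    (IsometryEquiv.vaddConst (z' i₀)), fun i => ?_⟩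
  simp [hg]

lemma isSymm_SEucl {n q : ℕ} (z : Fin n → EuclideanSpace ℝ (Fin q)) : (SEucl z).IsSymm :=
  IsSymm.ext fun i j => by simp [SEucl, norm_sub_rev]

theorem norm_sub_sq_eq_of_infoNCE_eq_entropicBound {n q : ℕ} (hn : 2 * q + 3 < n)
    {D : Matrix (Fin n) (Fin n) ℝ} (hDsymm : D.IsSymm) (hDdiag : ∀ i, D i i = 0)
    (hrank : D.rank ≤ q + 2) {z : Fin n → EuclideanSpace ℝ (Fin q)}
    (hz : infoNCE (Wexp D) (SEucl z) = entropicBound (Wexp D)) (i j : Fin n) :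
    ‖z i - z j‖ ^ 2 = D i j := by
  have hW : Wexp D = (-D).map exp := rfl
  obtain ⟨c, hc⟩ := exists_forall_ne_eq_add_of_offDiagRowNormalize_map_exp_eq hDsymm.neg
    (isSymm_SEucl z) fun i j hji => by
      rw [← hW]
      exact offDiagRowNormalize_eq_of_infoNCE_eq_entropicBound (fun _ _ _ => exp_pos _) hz i j hji
  have hD : ∀ i j, i ≠ j → D i j = ‖z i - z j‖ ^ 2 + c := fun i j hij => by
    have := hc i j hij
    simp only [SEucl, of_apply, Matrix.neg_apply] at this
    linarith
  obtain rfl : c = 0 := by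
    by_contra hc0
    have := card_le_rank_add_finrank_add_one hc0 hDdiag hD
    simp only [Fintype.card_fin, finrank_euclideanSpace_fin] at this
    omega
  rcases eq_or_ne i j with rfl | hij
  · simp [hDdiag]
  · simp [hD i j hij]

theorem statement3_general {n q : ℕ} (hn : 2 * q + 3 < n)
    (D : Matrix (Fin n) (Fin n) ℝ) (hDsymm : D.IsSymm)
    (hDdiag : ∀ i : Fin n, D i i = 0)
    (hrank : D.rank ≤ q + 2) :
    ((∃ z : Fin n → EuclideanSpace ℝ (Fin q),
        infoNCE (Wexp D) (SEucl z) = entropicBound (Wexp D)) ↔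
      (∃ p : Fin n → EuclideanSpace ℝ (Fin q), ∀ i j : Fin n, ‖p i - p j‖ ^ 2 = D i j)) ∧
    (∀ z : Fin n → EuclideanSpace ℝ (Fin q),
      infoNCE (Wexp D) (SEucl z) = entropicBound (Wexp D) →
      ∀ i j : Fin n, ‖z i - z j‖ ^ 2 = D i j) ∧
    (∀ z z' : Fin n → EuclideanSpace ℝ (Fin q),
      infoNCE (Wexp D) (SEucl z) = entropicBound (Wexp D) →
      infoNCE (Wexp D) (SEucl z') = entropicBound (Wexp D) →
      ∃ f : EuclideanSpace ℝ (Fin q) ≃ᵢ EuclideanSpace ℝ (Fin q),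
        ∀ i : Fin n, z' i = f (z i)) := by
  have realizes := fun z (hz : infoNCE (Wexp D) (SEucl z) = entropicBound (Wexp D)) =>
    norm_sub_sq_eq_of_infoNCE_eq_entropicBound hn hDsymm hDdiag hrank hz
  refine ⟨⟨fun ⟨z, hz⟩ => ⟨z, realizes z hz⟩, fun ⟨p, hp⟩ => ⟨p, ?_⟩⟩, realizes, ?_⟩
  · have : (SEucl p).map exp = Wexp D := by
      ext i j
      simp [SEucl, Wexp, hp]
    rw [← this]
    exact infoNCE_map_exp_self _
  · intro z z' hz hz'
    have hcongr : z ≅ z' := congruent_iff_dist_eq.2 fun i j => by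
      rw [dist_eq_norm, dist_eq_norm, ← sq_eq_sq₀ (norm_nonneg _) (norm_nonneg _),
        realizes z hz, realizes z' hz']
    obtain ⟨f, hf⟩ := hcongr.exists_isometryEquiv_apply_eq
    exact ⟨f, fun i => (hf i).symm⟩

/-- Euclidean DGP: existence of an embedding attaining the entropic
lower bound iff `D` is realizable in `ℝ^q`; attaining embeddings realize `D` exactly
and are unique up to a Euclidean isometry. -/
theorem statement3 {n q : ℕ} (hq : 1 ≤ q) (hn : 2 * q + 3 < n)
    (D : Matrix (Fin n) (Fin n) ℝ) (hDsymm : D.IsSymm)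
    (hDnn : ∀ i j : Fin n, 0 ≤ D i j) (hDdiag : ∀ i : Fin n, D i i = 0)
    (hrank : D.rank ≤ q + 2) :
    ((∃ z : Fin n → EuclideanSpace ℝ (Fin q),
        infoNCE (Wexp D) (SEucl z) = entropicBound (Wexp D)) ↔
      (∃ p : Fin n → EuclideanSpace ℝ (Fin q), ∀ i j : Fin n, ‖p i - p j‖ ^ 2 = D i j)) ∧
    (∀ z : Fin n → EuclideanSpace ℝ (Fin q),
      infoNCE (Wexp D) (SEucl z) = entropicBound (Wexp D) →
      ∀ i j : Fin n, ‖z i - z j‖ ^ 2 = D i j) ∧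
    (∀ z z' : Fin n → EuclideanSpace ℝ (Fin q),
      infoNCE (Wexp D) (SEucl z) = entropicBound (Wexp D) →
      infoNCE (Wexp D) (SEucl z') = entropicBound (Wexp D) →
      ∃ f : EuclideanSpace ℝ (Fin q) ≃ᵢ EuclideanSpace ℝ (Fin q),
        ∀ i : Fin n, z' i = f (z i)) :=
  statement3_general hn D hDsymm hDdiag hrank
end

section
/- Let q ≥ 1, n > 2q + 4 and τ > 0. Let D = (d_{ij}) be a symmetric n×n real matrix with nonnegative entries, zero diagonal, and rank(D) ≤ q + 1. Set w_{ij} = exp(-d_{ij}) and, for nonzero z_1,…,z_n ∈ ℝ^q, let S_Z have entries s_{ij} = cos(z_i, z_j)/τ. Then there exist nonzero z_1,…,z_n ∈ ℝ^q with L_W(S_Z) = H(W) if and only if there exist points p_1,…,p_n ∈ ℝ^q with ‖p_i‖ = 1/√(2τ) for all i and ‖p_i - p_j‖² = d_{ij} for all i, j. Moreover, every embedding Z attaining the bound satisfies cos(z_i, z_j) = 1 - τ·d_{ij} for all i ≠ j, and for any two attaining embeddings Z, Z' there is a linear isometry O of ℝ^q with z'_i/‖z'_i‖ = O(z_i/‖z_i‖)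 for all i. -/
open scoped BigOperators

/-- Cosine similarity of two vectors of `ℝ^q`. -/
noncomputable def cosSim {q : ℕ} (u v : EuclideanSpace ℝ (Fin q)) : ℝ :=
  (inner ℝ u v : ℝ) / (‖u‖ * ‖v‖)

/-- Latent similarity matrix `s_{ij} = cos(z_i, z_j)/τ`. -/
noncomputable def SCos {n q : ℕ} (τ : ℝ) (z : Fin n → EuclideanSpace ℝ (Fin q)) :
    Matrix (Fin n) (Fin n) ℝ :=
  Matrix.of fun i j => cosSim (z i) (z j) / τ

lemma gibbs_aux {ι : Type*} (s : Finset ι) (p q : ι → ℝ) (hp : ∀ j ∈ s, 0 < p j)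
    (hq : ∀ j ∈ s, 0 < q j) (hps : ∑ j ∈ s, p j = 1) (hqs : ∑ j ∈ s, q j = 1) :
    0 ≤ ∑ j ∈ s, p j * (Real.log (p j) - Real.log (q j)) ∧
    ((∑ j ∈ s, p j * (Real.log (p j) - Real.log (q j))) = 0 ↔ ∀ j ∈ s, q j = p j) := by
  set g : ι → ℝ := fun j => q j - p j + p j * (Real.log (p j) - Real.log (q j)) with hg
  have hgnn : ∀ j ∈ s, 0 ≤ g j := by
    intro j hj
    have hpj := hp j hj; have hqj := hq j hj
    have hlog : Real.log (q j) - Real.log (p j) ≤ q j / p j - 1 := by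
      have := Real.log_le_sub_one_of_pos (div_pos hqj hpj)
      rwa [Real.log_div hqj.ne' hpj.ne'] at this
    have := mul_le_mul_of_nonneg_left hlog hpj.le
    have h2 : p j * (q j / p j - 1) = q j - p j := by field_simp
    simp only [hg]; nlinarith
  have hsum : ∑ j ∈ s, g j = ∑ j ∈ s, p j * (Real.log (p j) - Real.log (q j)) := by
    simp only [hg]
    rw [Finset.sum_add_distrib, Finset.sum_sub_distrib, hps, hqs]
    ring
  have hpos : ∀ j ∈ s, g j = 0 → q j = p j := by
    intro j hj hz
    by_contra hne
    have hpj := hp j hj; have hqj := hq j hj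
    have hdiv : q j / p j ≠ 1 := by
      intro h; exact hne (by field_simp at h; linarith)
    have hlog : Real.log (q j / p j) < q j / p j - 1 :=
      Real.log_lt_sub_one_of_pos (div_pos hqj hpj) hdiv
    rw [Real.log_div hqj.ne' hpj.ne'] at hlog
    have := mul_lt_mul_of_pos_left hlog hpj
    have h2 : p j * (q j / p j - 1) = q j - p j := by field_simp
    simp only [hg] at hz; nlinarith
  constructor
  · rw [← hsum]; exact Finset.sum_nonneg hgnn
  · constructor
    · intro h
      rw [← hsum] at h
      intro j hj
      exact hpos j hj ((Finset.sum_eq_zero_iff_of_nonneg hgnn).mp h j hj)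
    · intro h
      rw [← hsum]
      apply Finset.sum_eq_zero
      intro j hj
      simp [hg, h j hj]

lemma infoNCE_eq_iff {n : ℕ} (hn : 2 ≤ n) (W S : Matrix (Fin n) (Fin n) ℝ)
    (hW : ∀ i j, 0 < W i j) :
    (infoNCE W S = entropicBound W ↔
      ∀ i : Fin n, ∀ j ∈ Finset.univ.erase i,
        Real.exp (S i j) / ∑ k ∈ Finset.univ.erase i, Real.exp (S i k)
          = W i j / ∑ k ∈ Finset.univ.erase i, W i k) := by
  have hnpos : (0:ℝ) < n := by positivity
  set P : Fin n → Fin n → ℝ := fun i j => W i j / ∑ k ∈ Finset.univ.erase i, W i k with hP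
  set Q : Fin n → Fin n → ℝ := fun i j =>
    Real.exp (S i j) / ∑ k ∈ Finset.univ.erase i, Real.exp (S i k) with hQ
  have hne : ∀ i : Fin n, (Finset.univ.erase i).Nonempty := by
    intro i
    rw [← Finset.card_pos, Finset.card_erase_of_mem (Finset.mem_univ i), Finset.card_univ,
      Fintype.card_fin]
    omega
  have hWs : ∀ i : Fin n, 0 < ∑ k ∈ Finset.univ.erase i, W i k := fun i =>
    Finset.sum_pos (fun k _ => hW i k) (hne i)
  have hEs : ∀ i : Fin n, 0 < ∑ k ∈ Finset.univ.erase i, Real.exp (S i k) := fun i =>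
    Finset.sum_pos (fun k _ => Real.exp_pos _) (hne i)
  have hPpos : ∀ i, ∀ j ∈ Finset.univ.erase i, 0 < P i j := fun i j _ =>
    div_pos (hW i j) (hWs i)
  have hQpos : ∀ i, ∀ j ∈ Finset.univ.erase i, 0 < Q i j := fun i j _ =>
    div_pos (Real.exp_pos _) (hEs i)
  have hPsum : ∀ i, ∑ j ∈ Finset.univ.erase i, P i j = 1 := by
    intro i; rw [← Finset.sum_div, div_self (hWs i).ne']
  have hQsum : ∀ i, ∑ j ∈ Finset.univ.erase i, Q i j = 1 := by
    intro i; rw [← Finset.sum_div, div_self (hEs i).ne']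
  have hKL := fun i => gibbs_aux (Finset.univ.erase i) (P i) (Q i) (hPpos i) (hQpos i)
    (hPsum i) (hQsum i)
  have hdiff : entropicBound W - infoNCE W S =
      -(1/(n:ℝ)) * ∑ i : Fin n, ∑ j ∈ Finset.univ.erase i,
        P i j * (Real.log (P i j) - Real.log (Q i j)) := by
    rw [infoNCE, entropicBound]
    rw [← mul_sub, ← Finset.sum_sub_distrib]
    congr 1
    apply Finset.sum_congr rfl; intro i _
    rw [← Finset.sum_sub_distrib]
    apply Finset.sum_congr rfl; intro j _
    ring
  constructor
  · intro h i j hj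
    have hsum0 : ∑ i : Fin n, ∑ j ∈ Finset.univ.erase i,
        P i j * (Real.log (P i j) - Real.log (Q i j)) = 0 := by
      have : entropicBound W - infoNCE W S = 0 := by rw [h]; ring
      rw [hdiff] at this
      have hne' : -(1/(n:ℝ)) ≠ 0 := by
        simp only [ne_eq, neg_eq_zero, div_eq_zero_iff]; push_neg
        exact ⟨one_ne_zero, by positivity⟩
      exact (mul_eq_zero.mp this).resolve_left hne'
    have heach := (Finset.sum_eq_zero_iff_of_nonneg (fun i _ => (hKL i).1)).mp hsum0
    exact ((hKL i).2.mp (heach i (Finset.mem_univ i))) j hj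
  · intro h
    have : entropicBound W - infoNCE W S = 0 := by
      rw [hdiff]
      rw [Finset.sum_eq_zero (fun i _ => (hKL i).2.mpr (h i))]
      ring
    linarith

lemma matrix_rank_add_le {n : ℕ} (A B : Matrix (Fin n) (Fin n) ℝ) :
    (A + B).rank ≤ A.rank + B.rank := by
  simp only [Matrix.rank]
  have hrange : LinearMap.range (A + B).mulVecLin ≤
      LinearMap.range A.mulVecLin ⊔ LinearMap.range B.mulVecLin := by
    rintro x ⟨v, rfl⟩
    rw [Matrix.mulVecLin_add]
    exact Submodule.add_mem_sup ⟨v, rfl⟩ ⟨v, rfl⟩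
  calc Module.finrank ℝ ↥(LinearMap.range (A + B).mulVecLin)
      ≤ Module.finrank ℝ ↥(LinearMap.range A.mulVecLin ⊔ LinearMap.range B.mulVecLin) :=
        Submodule.finrank_mono hrange
    _ ≤ _ := Submodule.finrank_add_le_finrank_add_finrank _ _

lemma rank_smul_one {n : ℕ} {c : ℝ} (hc : c ≠ 0) :
    (c • (1 : Matrix (Fin n) (Fin n) ℝ)).rank = n := by
  apply le_antisymm
  · exact (Matrix.rank_le_card_height _).trans (by simp)
  · have h : (c • (1 : Matrix (Fin n) (Fin n) ℝ)) * (c⁻¹ • 1) = 1 := by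
      rw [Matrix.smul_mul, Matrix.mul_smul, one_mul, smul_smul, mul_inv_cancel₀ hc, one_smul]
    calc n = (1 : Matrix (Fin n) (Fin n) ℝ).rank := by simp
      _ = ((c • (1 : Matrix (Fin n) (Fin n) ℝ)) * (c⁻¹ • 1)).rank := by rw [h]
      _ ≤ _ := Matrix.rank_mul_le_left _ _

lemma norm_normalize {q : ℕ} {x : EuclideanSpace ℝ (Fin q)} (hx : x ≠ 0) :
    ‖‖x‖⁻¹ • x‖ = 1 := by
  rw [norm_smul, norm_inv, norm_norm, inv_mul_cancel₀ (norm_ne_zero_iff.mpr hx)]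

lemma inner_normalize {q : ℕ} (x y : EuclideanSpace ℝ (Fin q)) :
    (inner ℝ (‖x‖⁻¹ • x) (‖y‖⁻¹ • y) : ℝ) = cosSim x y := by
  rw [real_inner_smul_left, real_inner_smul_right, cosSim]
  ring

lemma cosSim_comm {q : ℕ} (x y : EuclideanSpace ℝ (Fin q)) : cosSim x y = cosSim y x := by
  rw [cosSim, cosSim, real_inner_comm, mul_comm]

-- Gram matrix has rank ≤ q
lemma gram_rank_le {q n : ℕ} (u : Fin n → EuclideanSpace ℝ (Fin q)) :
    (Matrix.of fun i j => (inner ℝ (u i) (u j) : ℝ)).rank ≤ q := by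
  set M : Matrix (Fin q) (Fin n) ℝ := Matrix.of fun a i => u i a with hM
  have hfac : (Matrix.of fun i j => (inner ℝ (u i) (u j) : ℝ)) = M.transpose * M := by
    ext i j
    simp only [Matrix.of_apply, Matrix.mul_apply, Matrix.transpose_apply, hM]
    rw [PiLp.inner_apply]
    simp [RCLike.inner_apply, starRingEnd_apply]
    exact Finset.sum_congr rfl (fun _ _ => mul_comm _ _)
  rw [hfac]
  exact (Matrix.rank_mul_le_right _ _).trans
    ((Matrix.rank_le_card_height M).trans (by simp))

lemma const_rank_le {n : ℕ} (c : ℝ) :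
    (Matrix.of fun (_ _ : Fin n) => c).rank ≤ 1 := by
  have hfac : (Matrix.of fun (_ _ : Fin n) => c) =
      (Matrix.of fun (_ : Fin n) (_ : Unit) => c) * (Matrix.of fun (_ : Unit) (_ : Fin n) => (1:ℝ)) := by
    ext i j; simp [Matrix.mul_apply]
  rw [hfac]
  exact (Matrix.rank_mul_le_left _ _).trans
    ((Matrix.rank_le_card_width _).trans (by simp))

lemma scaled_rank_le {n : ℕ} (τ : ℝ) (D : Matrix (Fin n) (Fin n) ℝ) :
    (Matrix.of fun i j => τ * D i j).rank ≤ D.rank := by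
  have hfac : (Matrix.of fun i j => τ * D i j) = Matrix.diagonal (fun _ => τ) * D := by
    ext i j; simp [Matrix.diagonal_mul]
  rw [hfac]
  exact Matrix.rank_mul_le_right _ _

lemma cos_eq_of_attains {n q : ℕ} (hq : 1 ≤ q) (hn : 2 * q + 4 < n) (τ : ℝ) (hτ : 0 < τ)
    (D : Matrix (Fin n) (Fin n) ℝ) (hDsymm : D.IsSymm)
    (hDnn : ∀ i j : Fin n, 0 ≤ D i j) (hDdiag : ∀ i : Fin n, D i i = 0)
    (hrank : D.rank ≤ q + 1)
    (z : Fin n → EuclideanSpace ℝ (Fin q)) (hz : ∀ i, z i ≠ 0)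
    (heq : infoNCE (Wexp D) (SCos τ z) = entropicBound (Wexp D)) :
    ∀ i j : Fin n, i ≠ j → cosSim (z i) (z j) = 1 - τ * D i j := by
  have hn2 : 2 ≤ n := by omega
  have hratio := (infoNCE_eq_iff hn2 (Wexp D) (SCos τ z)
    (fun i j => Real.exp_pos _)).mp heq
  have hne : ∀ i : Fin n, (Finset.univ.erase i).Nonempty := by
    intro i
    rw [← Finset.card_pos, Finset.card_erase_of_mem (Finset.mem_univ i), Finset.card_univ,
      Fintype.card_fin]
    omega
  set S := SCos τ z with hS
  have hEs : ∀ i : Fin n, 0 < ∑ k ∈ Finset.univ.erase i, Real.exp (S i k) := fun i =>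
    Finset.sum_pos (fun k _ => Real.exp_pos _) (hne i)
  have hWs : ∀ i : Fin n, 0 < ∑ k ∈ Finset.univ.erase i, Wexp D i k := fun i =>
    Finset.sum_pos (fun k _ => Real.exp_pos _) (hne i)
  set c : Fin n → ℝ := fun i =>
    Real.log (∑ k ∈ Finset.univ.erase i, Real.exp (S i k)) -
    Real.log (∑ k ∈ Finset.univ.erase i, Wexp D i k) with hc
  have hkey : ∀ i j : Fin n, i ≠ j → S i j + D i j = c i := by
    intro i j hij
    have h := hratio i j (Finset.mem_erase.mpr ⟨Ne.symm hij, Finset.mem_univ j⟩)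
    rw [show Wexp D i j = Real.exp (-(D i j)) from rfl] at h
    have h2 := congrArg Real.log h
    rw [Real.log_div (Real.exp_pos _).ne' (hEs i).ne',
      Real.log_div (Real.exp_pos _).ne' (hWs i).ne', Real.log_exp, Real.log_exp] at h2
    simp only [hc]; linarith
  -- symmetry of S and D gives c constant
  have hSsymm : ∀ i j : Fin n, S i j = S j i := by
    intro i j; simp only [hS, SCos, Matrix.of_apply, cosSim_comm]
  have hDsym : ∀ i j : Fin n, D i j = D j i := fun i j => (hDsymm.apply i j).symm
  have i0 : Fin n := ⟨0, by omega⟩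
  have hcconst : ∀ i : Fin n, c i = c i0 := by
    intro i
    by_cases hi : i = i0
    · rw [hi]
    · have h1 := hkey i i0 hi
      have h2 := hkey i0 i (fun hh => hi hh.symm)
      rw [hSsymm i i0, hDsym i i0] at h1
      linarith
  set C := c i0 with hC
  -- Gram matrix identity
  set u : Fin n → EuclideanSpace ℝ (Fin q) := fun i => ‖z i‖⁻¹ • z i with hu
  have hSval : ∀ i j : Fin n, i ≠ j → cosSim (z i) (z j) = τ * C - τ * D i j := by
    intro i j hij
    have h1 := hkey i j hij
    rw [hcconst i] at h1
    have h2 : S i j = cosSim (z i) (z j) / τ := rfl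
    rw [h2] at h1
    field_simp at h1 ⊢
    linarith
  have hmid : (1 - τ * C) • (1 : Matrix (Fin n) (Fin n) ℝ) =
      (Matrix.of fun i j => (inner ℝ (u i) (u j) : ℝ)) +
      (Matrix.of fun (_ _ : Fin n) => -(τ * C)) +
      (Matrix.of fun i j => τ * D i j) := by
    ext i j
    by_cases hij : i = j
    · subst hij
      have h1 : (inner ℝ (u i) (u i) : ℝ) = 1 := by
        rw [real_inner_self_eq_norm_sq, norm_normalize (hz i)]; norm_num
      simp only [Matrix.add_apply, Matrix.of_apply, Matrix.smul_apply, Matrix.one_apply_eq,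
        smul_eq_mul, mul_one, h1, hDdiag i]
      ring
    · have h1 : (inner ℝ (u i) (u j) : ℝ) = τ * C - τ * D i j := by
        simp only [hu]
        rw [inner_normalize]
        exact hSval i j hij
      simp only [Matrix.add_apply, Matrix.of_apply, Matrix.smul_apply,
        Matrix.one_apply_ne hij, smul_eq_mul, mul_zero, h1]
      ring
  -- rank argument
  have hτC : τ * C = 1 := by
    by_contra hne'
    have hc0 : (1 : ℝ) - τ * C ≠ 0 := fun hh => hne' (by linarith)
    have h1 : ((1 - τ * C) • (1 : Matrix (Fin n) (Fin n) ℝ)).rank = n := rank_smul_one hc0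
    have h2 : ((1 - τ * C) • (1 : Matrix (Fin n) (Fin n) ℝ)).rank ≤ q + 1 + (q + 1) := by
      rw [hmid]
      calc ((Matrix.of fun i j => (inner ℝ (u i) (u j) : ℝ)) +
          (Matrix.of fun (_ _ : Fin n) => -(τ * C)) +
          (Matrix.of fun i j => τ * D i j)).rank
          ≤ ((Matrix.of fun i j => (inner ℝ (u i) (u j) : ℝ)) +
            (Matrix.of fun (_ _ : Fin n) => -(τ * C))).rank +
            (Matrix.of fun i j => τ * D i j).rank := matrix_rank_add_le _ _
        _ ≤ (Matrix.of fun i j => (inner ℝ (u i) (u j) : ℝ)).rank +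
            (Matrix.of fun (_ _ : Fin n) => -(τ * C)).rank +
            (Matrix.of fun i j => τ * D i j).rank := by
              have := matrix_rank_add_le (Matrix.of fun i j => (inner ℝ (u i) (u j) : ℝ))
                (Matrix.of fun (_ _ : Fin n) => -(τ * C))
              omega
        _ ≤ q + 1 + (q + 1) := by
              have h3 := gram_rank_le u
              have h4 := const_rank_le (n := n) (-(τ * C))
              have h5 := (scaled_rank_le τ D).trans hrank
              omega
    omega
  intro i j hij
  rw [hSval i j hij, hτC]

noncomputable def combo {q n : ℕ} (v : Fin n → EuclideanSpace ℝ (Fin q)) :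
    (Fin n → ℝ) →ₗ[ℝ] EuclideanSpace ℝ (Fin q) where
  toFun c := ∑ i, c i • v i
  map_add' a b := by simp [add_smul, Finset.sum_add_distrib]
  map_smul' r a := by simp [smul_smul, Finset.smul_sum]

lemma combo_single {q n : ℕ} (v : Fin n → EuclideanSpace ℝ (Fin q)) (i : Fin n) :
    combo v (Pi.single i 1) = v i := by
  simp only [combo, LinearMap.coe_mk, AddHom.coe_mk]
  rw [Finset.sum_eq_single i]
  · simp
  · intro b _ hb; simp [Pi.single_apply, hb]
  · simp

lemma combo_inner {q n : ℕ} {u u' : Fin n → EuclideanSpace ℝ (Fin q)}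
    (h : ∀ i j, (inner ℝ (u i) (u j) : ℝ) = inner ℝ (u' i) (u' j)) (a b : Fin n → ℝ) :
    (inner ℝ (combo u a) (combo u b) : ℝ) = inner ℝ (combo u' a) (combo u' b) := by
  simp only [combo, LinearMap.coe_mk, AddHom.coe_mk, sum_inner, inner_sum,
    real_inner_smul_left, real_inner_smul_right, h]

lemma exists_isometry {q n : ℕ} (u u' : Fin n → EuclideanSpace ℝ (Fin q))
    (h : ∀ i j, (inner ℝ (u i) (u j) : ℝ) = inner ℝ (u' i) (u' j)) :
    ∃ O : EuclideanSpace ℝ (Fin q) ≃ₗᵢ[ℝ] EuclideanSpace ℝ (Fin q), ∀ i, u' i = O (u i) := by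
  set T := combo u with hT
  set T' := combo u' with hT'
  have hker : LinearMap.ker T ≤ LinearMap.ker T' := by
    intro a ha
    rw [LinearMap.mem_ker] at ha ⊢
    have : (inner ℝ (T' a) (T' a) : ℝ) = 0 := by
      rw [← combo_inner h a a, ha, inner_zero_left]
    exact inner_self_eq_zero.mp this
  set L0 : ((Fin n → ℝ) ⧸ LinearMap.ker T) →ₗ[ℝ] EuclideanSpace ℝ (Fin q) :=
    Submodule.liftQ _ T' hker with hL0
  set e := LinearMap.quotKerEquivRange T with he
  set L : ↥(LinearMap.range T) →ₗ[ℝ] EuclideanSpace ℝ (Fin q) :=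
    L0 ∘ₗ (e.symm : ↥(LinearMap.range T) →ₗ[ℝ] _) with hL
  have hLapp : ∀ a : Fin n → ℝ, ∀ hm : T a ∈ LinearMap.range T, L ⟨T a, hm⟩ = T' a := by
    intro a hm
    have h1 : e (Submodule.Quotient.mk a) = ⟨T a, hm⟩ := by
      apply Subtype.ext
      simp [he, LinearMap.quotKerEquivRange_apply_mk]
    have h2 : e.symm ⟨T a, hm⟩ = Submodule.Quotient.mk a := by
      rw [← h1, LinearEquiv.symm_apply_apply]
    simp [hL, h2, hL0, Submodule.liftQ_apply]
  have hnorm : ∀ x : ↥(LinearMap.range T), ‖L x‖ = ‖x‖ := by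
    rintro ⟨x, a, rfl⟩
    rw [hLapp a ⟨a, rfl⟩]
    have h1 : (inner ℝ (T' a) (T' a) : ℝ) = inner ℝ (T a) (T a) := (combo_inner h a a).symm
    rw [real_inner_self_eq_norm_sq, real_inner_self_eq_norm_sq] at h1
    have : ‖(⟨T a, ⟨a, rfl⟩⟩ : ↥(LinearMap.range T))‖ = ‖T a‖ := rfl
    rw [this]
    nlinarith [norm_nonneg (T' a), norm_nonneg (T a)]
  set Li : ↥(LinearMap.range T) →ₗᵢ[ℝ] EuclideanSpace ℝ (Fin q) := ⟨L, hnorm⟩ with hLi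
  set F := Li.extend with hF
  have hsurj : Function.Surjective F := by
    have hinj : Function.Injective F.toLinearMap := F.injective
    exact LinearMap.injective_iff_surjective.mp hinj
  refine ⟨LinearIsometryEquiv.ofSurjective F hsurj, fun i => ?_⟩
  have hmem : u i ∈ LinearMap.range T := ⟨Pi.single i 1, combo_single u i⟩
  have h1 : (LinearIsometryEquiv.ofSurjective F hsurj) (u i) = F (u i) := rfl
  have h2 : F (u i) = Li ⟨u i, hmem⟩ := by
    have := Li.extend_apply ⟨u i, hmem⟩
    simpa using this
  have h3 : (⟨u i, hmem⟩ : ↥(LinearMap.range T)) =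
      ⟨T (Pi.single i 1), ⟨Pi.single i 1, rfl⟩⟩ := Subtype.ext (combo_single u i).symm
  rw [h1, h2, h3]
  show u' i = L _
  rw [hLapp (Pi.single i 1) ⟨Pi.single i 1, rfl⟩, hT', combo_single]

/-- Spherical DGP: the entropic lower bound is attained by some nonzero
embedding iff `D` is realizable by points on the sphere of radius `1/√(2τ)` in `ℝ^q`;
attaining embeddings satisfy `cos(z_i,z_j) = 1 - τ d_{ij}` and their normalizations are
unique up to a linear isometry. -/
theorem statement4 {n q : ℕ} (hq : 1 ≤ q) (hn : 2 * q + 4 < n) (τ : ℝ) (hτ : 0 < τ)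
    (D : Matrix (Fin n) (Fin n) ℝ) (hDsymm : D.IsSymm)
    (hDnn : ∀ i j : Fin n, 0 ≤ D i j) (hDdiag : ∀ i : Fin n, D i i = 0)
    (hrank : D.rank ≤ q + 1) :
    ((∃ z : Fin n → EuclideanSpace ℝ (Fin q), (∀ i, z i ≠ 0) ∧
        infoNCE (Wexp D) (SCos τ z) = entropicBound (Wexp D)) ↔
      (∃ p : Fin n → EuclideanSpace ℝ (Fin q),
        (∀ i : Fin n, ‖p i‖ = 1 / Real.sqrt (2 * τ)) ∧
        (∀ i j : Fin n, ‖p i - p j‖ ^ 2 = D i j))) ∧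
    (∀ z : Fin n → EuclideanSpace ℝ (Fin q), (∀ i, z i ≠ 0) →
      infoNCE (Wexp D) (SCos τ z) = entropicBound (Wexp D) →
      ∀ i j : Fin n, i ≠ j → cosSim (z i) (z j) = 1 - τ * D i j) ∧
    (∀ z z' : Fin n → EuclideanSpace ℝ (Fin q), (∀ i, z i ≠ 0) → (∀ i, z' i ≠ 0) →
      infoNCE (Wexp D) (SCos τ z) = entropicBound (Wexp D) →
      infoNCE (Wexp D) (SCos τ z') = entropicBound (Wexp D) →
      ∃ O : EuclideanSpace ℝ (Fin q) ≃ₗᵢ[ℝ] EuclideanSpace ℝ (Fin q),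
        ∀ i : Fin n, ‖z' i‖⁻¹ • z' i = O (‖z i‖⁻¹ • z i)) := by
  have hn2 : 2 ≤ n := by omega
  have h2τ : (0:ℝ) < 2 * τ := by linarith
  have hsqrt : (0:ℝ) < Real.sqrt (2 * τ) := Real.sqrt_pos.mpr h2τ
  have hsq : Real.sqrt (2 * τ) ^ 2 = 2 * τ := Real.sq_sqrt h2τ.le
  refine ⟨⟨?_, ?_⟩, ?_, ?_⟩
  · -- forward: attaining z gives spherical realization
    rintro ⟨z, hz, heq⟩
    have hcos := cos_eq_of_attains hq hn τ hτ D hDsymm hDnn hDdiag hrank z hz heq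
    set u : Fin n → EuclideanSpace ℝ (Fin q) := fun i => ‖z i‖⁻¹ • z i with hu
    refine ⟨fun i => (Real.sqrt (2 * τ))⁻¹ • u i, fun i => ?_, fun i j => ?_⟩
    · rw [norm_smul, norm_inv, Real.norm_eq_abs, abs_of_pos hsqrt, hu]
      simp only []
      rw [norm_normalize (hz i), mul_one, one_div]
    · have hinner_uu : ∀ a b : Fin n, (inner ℝ (u a) (u b) : ℝ) =
        if a = b then 1 else 1 - τ * D a b := by
        intro a b
        by_cases hab : a = b
        · subst hab
          simp only [if_pos rfl, hu]
          rw [real_inner_self_eq_norm_sq, norm_normalize (hz a)]; norm_num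
        · simp only [if_neg hab, hu]
          rw [inner_normalize]
          exact hcos a b hab
      by_cases hij : i = j
      · subst hij
        simp [hDdiag i]
      · have hns := norm_sub_sq_real ((Real.sqrt (2 * τ))⁻¹ • u i) ((Real.sqrt (2 * τ))⁻¹ • u j)
        have hin : (inner ℝ ((Real.sqrt (2 * τ))⁻¹ • u i) ((Real.sqrt (2 * τ))⁻¹ • u j) : ℝ)
            = (2 * τ)⁻¹ * (1 - τ * D i j) := by
          rw [real_inner_smul_left, real_inner_smul_right, hinner_uu i j, if_neg hij]
          have : (Real.sqrt (2 * τ))⁻¹ * (Real.sqrt (2 * τ))⁻¹ = (2 * τ)⁻¹ := by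
            rw [← mul_inv]
            congr 1
            nlinarith
          rw [← mul_assoc, this]
        have hnormsq : ∀ a : Fin n, ‖(Real.sqrt (2 * τ))⁻¹ • u a‖ ^ 2 = (2 * τ)⁻¹ := by
          intro a
          rw [norm_smul, norm_inv, Real.norm_eq_abs, abs_of_pos hsqrt, hu]
          simp only []
          rw [norm_normalize (hz a), mul_one]
          rw [inv_pow, hsq]
        rw [hns, hin, hnormsq i, hnormsq j]
        field_simp
        ring
  · -- reverse: spherical realization gives attaining z
    rintro ⟨p, hpnorm, hpdist⟩
    have hpn : ∀ i, ‖p i‖ ≠ 0 := by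
      intro i
      rw [hpnorm i]
      positivity
    have hz : ∀ i, p i ≠ 0 := fun i => fun h => hpn i (by rw [h, norm_zero])
    refine ⟨p, hz, ?_⟩
    have hnormsq : ∀ a : Fin n, ‖p a‖ ^ 2 = (2 * τ)⁻¹ := by
      intro a
      rw [hpnorm a, div_pow, one_pow, hsq, one_div]
    have hScos : ∀ i j : Fin n, SCos τ p i j = 1 / τ - D i j := by
      intro i j
      have hns := norm_sub_sq_real (p i) (p j)
      rw [hpdist i j, hnormsq i, hnormsq j] at hns
      have hin : (inner ℝ (p i) (p j) : ℝ) = (1 / τ - D i j) / 2 := by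
        field_simp at hns ⊢
        linarith
      show cosSim (p i) (p j) / τ = 1 / τ - D i j
      rw [cosSim, hin, hpnorm i, hpnorm j]
      rw [div_mul_div_comm, one_mul, Real.mul_self_sqrt h2τ.le]
      field_simp
    rw [infoNCE_eq_iff hn2 (Wexp D) (SCos τ p) (fun i j => show (0:ℝ) < Wexp D i j from Real.exp_pos _)]
    intro i j hj
    have hexp : ∀ a b : Fin n, Real.exp (SCos τ p a b) = Real.exp (1/τ) * Wexp D a b := by
      intro a b
      rw [hScos a b, Real.exp_sub, show Wexp D a b = Real.exp (-(D a b)) from rfl,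
        Real.exp_neg, div_eq_mul_inv]
    have hsum : ∑ k ∈ Finset.univ.erase i, Real.exp (SCos τ p i k)
        = Real.exp (1/τ) * ∑ k ∈ Finset.univ.erase i, Wexp D i k := by
      rw [Finset.mul_sum]; exact Finset.sum_congr rfl (fun k _ => hexp i k)
    rw [hexp, hsum, mul_div_mul_left _ _ (Real.exp_ne_zero _)]
  · exact fun z hz heq => cos_eq_of_attains hq hn τ hτ D hDsymm hDnn hDdiag hrank z hz heq
  · intro z z' hz hz' heq heq'
    have hcos := cos_eq_of_attains hq hn τ hτ D hDsymm hDnn hDdiag hrank z hz heq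
    have hcos' := cos_eq_of_attains hq hn τ hτ D hDsymm hDnn hDdiag hrank z' hz' heq'
    apply exists_isometry
    intro i j
    by_cases hij : i = j
    · subst hij
      rw [real_inner_self_eq_norm_sq, real_inner_self_eq_norm_sq,
        norm_normalize (hz i), norm_normalize (hz' i)]
    · rw [inner_normalize, inner_normalize, hcos i j hij, hcos' i j hij]
end

section
/- Let q ≥ 2, n > 2q + 4, 1 ≤ ℓ ≤ q - 1, τ > 0, and let y_1,…,y_n ∈ ℝ^ℓ. Set w_{ij} = exp(-‖y_i - y_j‖²) (the y-Aware weighting) and, for nonzero z_1,…,z_n ∈ ℝ^q, let S_Z have entries s_{ij} = cos(z_i, z_j)/τ. If some embedding Z attains the entropic lower bound, L_W(S_Z) = H(W), then the labels lie on a hypersphere: there exist m ∈ ℝ^ℓ and ρ ≥ 0 with ‖y_i - m‖ = ρ for all i. -/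
open scoped BigOperators

/-- y-Aware weights `w_{ij} = exp(-‖y_i - y_j‖²)`. -/
noncomputable def Wlabel {n l : ℕ} (y : Fin n → EuclideanSpace ℝ (Fin l)) :
    Matrix (Fin n) (Fin n) ℝ :=
  Matrix.of fun i j => Real.exp (-‖y i - y j‖ ^ 2)

/-!
By the equality case of Gibbs' inequality, attaining the entropic bound forces every row of
`softmax S` to be the normalised row of `W`; since both matrices are symmetric, `S = log W + c`
off the diagonal for a single constant `c`. For the unit vectors `uᵢ = zᵢ / ‖zᵢ‖` this says
`⟪uᵢ, uⱼ⟫ = τc - τ‖yᵢ - yⱼ‖² + (1 - τc) δᵢⱼ`. For an affine relation `v` of the labels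
(`∑ vᵢ = 0`, `∑ vᵢ yᵢ = 0`) the first two terms of this Gram matrix contribute only through
`∑ vⱼ ‖yⱼ‖²`, and `‖∑ vᵢ uᵢ‖² = (1 - τc) ‖v‖²`. The affine relations form a space of dimension at
least `n - l - 1 > q`, so `v ↦ ∑ vᵢ uᵢ` cannot be injective on it, which forces `τc = 1`. Then
`∑ vᵢ uᵢ = 0` and `⟪uᵢ, ∑ vⱼ uⱼ⟫ = -τ ∑ vⱼ ‖yⱼ‖²`, so every affine relation of the `yᵢ` is also
a relation of the `‖yᵢ‖²`. Hence `‖yᵢ‖² = ⟪m, yᵢ⟫ + α` for some `m` and `α`, i.e. the labels lie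
on a sphere centred at `m / 2`.
-/

open Real InformationTheory Finset Module LinearMap RealInnerProductSpace

theorem mul_log_sub_mul_log_add_sub_eq_mul_klFun {p q : ℝ} (hq : 0 < q) :
    p * log p - p * log q + (q - p) = q * klFun (p / q) := by
  rcases eq_or_ne p 0 with rfl | hp
  · simp [klFun]
  rw [klFun, log_div hp hq.ne']
  field_simp
  ring

theorem eq_of_sum_mul_log_eq_sum_mul_log_s7 {α : Type*} {s : Finset α} {p q : α → ℝ}
    (hp : ∀ a ∈ s, 0 ≤ p a) (hq : ∀ a ∈ s, 0 < q a) (hsum : ∑ a ∈ s, p a = ∑ a ∈ s, q a)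
    (h : ∑ a ∈ s, p a * log (q a) = ∑ a ∈ s, p a * log (p a)) :
    ∀ a ∈ s, p a = q a := by
  have hzero : ∑ a ∈ s, q a * klFun (p a / q a) = 0 := by
    rw [← sum_congr rfl fun a ha => mul_log_sub_mul_log_add_sub_eq_mul_klFun (hq a ha),
      sum_add_distrib, sum_sub_distrib, sum_sub_distrib, h, hsum]
    ring
  have hterm := (sum_eq_zero_iff_of_nonneg fun a ha =>
    mul_nonneg (hq a ha).le (klFun_nonneg (div_nonneg (hp a ha) (hq a ha).le))).mp hzero
  intro a ha
  have hkl := (mul_eq_zero.mp (hterm a ha)).resolve_left (hq a ha).ne'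
  exact (div_eq_one_iff_eq (hq a ha).ne').mp
    ((klFun_eq_zero_iff (div_nonneg (hp a ha) (hq a ha).le)).mp hkl)

theorem sum_div_sum_eq_sum_div_sum {α : Type*} {s : Finset α} {f g : α → ℝ}
    (hf : ∀ a ∈ s, 0 < f a) (hg : ∀ a ∈ s, 0 < g a) :
    ∑ a ∈ s, f a / ∑ b ∈ s, f b = ∑ a ∈ s, g a / ∑ b ∈ s, g b := by
  rw [← sum_div, ← sum_div]
  rcases s.eq_empty_or_nonempty with rfl | hne
  · simp
  rw [div_self (sum_pos hf hne).ne', div_self (sum_pos hg hne).ne']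

theorem div_sum_erase_eq_of_infoNCE_eq_entropicBound {n : ℕ} {W S : Matrix (Fin n) (Fin n) ℝ}
    (hW : ∀ i j, i ≠ j → 0 < W i j) (h : infoNCE W S = entropicBound W) {i j : Fin n}
    (hij : i ≠ j) :
    W i j / ∑ k ∈ univ.erase i, W i k = exp (S i j) / ∑ k ∈ univ.erase i, exp (S i k) := by
  have hn : (n : ℝ) ≠ 0 := Nat.cast_ne_zero.mpr (Fin.pos i).ne'
  let P : (Σ _ : Fin n, Fin n) → ℝ := fun x => W x.1 x.2 / ∑ k ∈ univ.erase x.1, W x.1 k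
  let Q : (Σ _ : Fin n, Fin n) → ℝ := fun x => exp (S x.1 x.2) / ∑ k ∈ univ.erase x.1, exp (S x.1 k)
  have hpos : ∀ f : Fin n → Fin n → ℝ, (∀ i j, i ≠ j → 0 < f i j) →
      ∀ x ∈ univ.sigma fun i => univ.erase i, 0 < f x.1 x.2 / ∑ k ∈ univ.erase x.1, f x.1 k := by
    rintro f hf ⟨i, j⟩ hx
    have hj : j ∈ univ.erase i := (mem_sigma.mp hx).2
    exact div_pos (hf i j (ne_of_mem_erase hj).symm)
      (sum_pos (fun k hk => hf i k (ne_of_mem_erase hk).symm) ⟨j, hj⟩)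
  have hPQ := eq_of_sum_mul_log_eq_sum_mul_log_s7 (s := univ.sigma fun i => univ.erase i)
    (p := P) (q := Q)
    (fun x hx => (hpos W hW x hx).le) (hpos (fun i j => exp (S i j)) (fun _ _ _ => exp_pos _))
    (by
      simp only [P, Q, sum_sigma]
      exact sum_congr rfl fun i _ => sum_div_sum_eq_sum_div_sum
        (fun k hk => hW i k (ne_of_mem_erase hk).symm) (fun _ _ => exp_pos _))
    (by
      simp only [infoNCE, entropicBound, mul_right_inj' (neg_ne_zero.mpr (one_div_ne_zero hn))] at h
      simpa only [P, Q, sum_sigma] using h)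
  exact hPQ ⟨i, j⟩ (mem_sigma.mpr ⟨mem_univ i, mem_erase.mpr ⟨hij.symm, mem_univ j⟩⟩)

theorem exists_forall_ne_eq_log_add_of_infoNCE_eq_entropicBound {n : ℕ}
    {W S : Matrix (Fin n) (Fin n) ℝ} (hW : ∀ i j, i ≠ j → 0 < W i j)
    (hWsymm : ∀ i j, W i j = W j i) (hSsymm : ∀ i j, S i j = S j i)
    (h : infoNCE W S = entropicBound W) :
    ∃ c, ∀ i j, i ≠ j → S i j = log (W i j) + c := by
  let c : Fin n → ℝ := fun i =>
    log (∑ k ∈ univ.erase i, exp (S i k)) - log (∑ k ∈ univ.erase i, W i k)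
  have hrow : ∀ i j, i ≠ j → S i j = log (W i j) + c i := by
    intro i j hij
    have hj : j ∈ univ.erase i := mem_erase.mpr ⟨hij.symm, mem_univ j⟩
    have hlog := congrArg log (div_sum_erase_eq_of_infoNCE_eq_entropicBound hW h hij)
    have hWrow : 0 < ∑ k ∈ univ.erase i, W i k :=
      sum_pos (fun k hk => hW i k (ne_of_mem_erase hk).symm) ⟨j, hj⟩
    rw [log_div (hW i j hij).ne' hWrow.ne',
      log_div (exp_pos _).ne' (sum_pos (fun _ _ => exp_pos _) ⟨j, hj⟩).ne', log_exp] at hlog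
    linarith
  rcases isEmpty_or_nonempty (Fin n) with hempty | hne
  · exact ⟨0, fun i => hempty.elim i⟩
  obtain ⟨i₀⟩ := hne
  have hconst : ∀ i j, i ≠ j → c i = c j := fun i j hij => by
    linarith [hrow i j hij, hrow j i hij.symm, hSsymm i j, congrArg log (hWsymm i j)]
  refine ⟨c i₀, fun i j hij => ?_⟩
  rcases eq_or_ne i i₀ with rfl | hi
  · exact hrow i j hij
  · rw [hrow i j hij, hconst i i₀ hi]

theorem finrank_le_finrank_add_finrank_of_ker_inf_ker_eq_bot {K V U F : Type*} [Field K]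
    [AddCommGroup V] [Module K V] [AddCommGroup U] [Module K U] [FiniteDimensional K U]
    [AddCommGroup F] [Module K F] [FiniteDimensional K F] {f : V →ₗ[K] U} {g : V →ₗ[K] F}
    (h : ker f ⊓ ker g = ⊥) : finrank K V ≤ finrank K U + finrank K F := by
  rw [← finrank_prod]
  exact finrank_le_finrank_of_injective (f := f.prod g) (by rw [← ker_eq_bot, ker_prod, h])

section AffineRelations

variable {ι E : Type*} [Fintype ι] [NormedAddCommGroup E] [InnerProductSpace ℝ E]

def affineRelations (y : ι → E) : Submodule ℝ (ι → ℝ) :=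
  ker (Fintype.linearCombination ℝ fun i => (y i, (1 : ℝ)))

theorem mem_affineRelations {y : ι → E} {v : ι → ℝ} :
    v ∈ affineRelations y ↔ ∑ i, v i • y i = 0 ∧ ∑ i, v i = 0 := by
  simp [affineRelations, Fintype.linearCombination_apply, Prod.ext_iff, Prod.fst_sum, Prod.snd_sum]

theorem exists_eq_inner_add_of_affineRelations_le_ker [FiniteDimensional ℝ E] {y : ι → E}
    {d : ι → ℝ} (h : affineRelations y ≤ ker (Fintype.linearCombination ℝ d)) :
    ∃ (m : E) (α : ℝ), ∀ i, d i = ⟪m, y i⟫ + α := by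
  classical
  have hd : Fintype.linearCombination ℝ d ∈
      range (Fintype.linearCombination ℝ fun i => (y i, (1 : ℝ))).dualMap := by
    rw [range_dualMap_eq_dualAnnihilator_ker, Submodule.mem_dualAnnihilator]
    exact fun v hv => h hv
  obtain ⟨φ, hφ⟩ := hd
  refine ⟨(InnerProductSpace.toDual ℝ E).symm (φ ∘ₗ inl ℝ E ℝ).toContinuousLinearMap,
    φ (0, 1), fun i => ?_⟩
  have hi := LinearMap.congr_fun hφ (Pi.single i 1)
  rw [dualMap_apply, Fintype.linearCombination_apply_single,
    Fintype.linearCombination_apply_single, one_smul, one_smul] at hi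
  rw [InnerProductSpace.toDual_symm_apply, coe_toContinuousLinearMap', ← hi, comp_apply, inl_apply,
    ← map_add, Prod.mk_add_mk, add_zero, zero_add]

theorem exists_norm_sub_eq_of_affineRelations_le_ker [FiniteDimensional ℝ E] {y : ι → E}
    (h : affineRelations y ≤ ker (Fintype.linearCombination ℝ fun i => ‖y i‖ ^ 2)) :
    ∃ (m : E) (ρ : ℝ), 0 ≤ ρ ∧ ∀ i, ‖y i - m‖ = ρ := by
  obtain ⟨m, α, hm⟩ := exists_eq_inner_add_of_affineRelations_le_ker h
  refine ⟨(2⁻¹ : ℝ) • m, √(α + ‖(2⁻¹ : ℝ) • m‖ ^ 2), sqrt_nonneg _, fun i => ?_⟩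
  rw [← sqrt_sq (norm_nonneg _), norm_sub_sq_real, hm i, real_inner_smul_right, real_inner_comm]
  ring_nf

section Gram

variable {F : Type*} [NormedAddCommGroup F] [InnerProductSpace ℝ F] {y : ι → E} {u : ι → F}
  {a t : ℝ}

theorem inner_linearCombination_of_mem_affineRelations
    (hoff : ∀ i j, i ≠ j → ⟪u i, u j⟫ = a - t * ‖y i - y j‖ ^ 2) (hdiag : ∀ i, ‖u i‖ = 1)
    {v : ι → ℝ} (hv : v ∈ affineRelations y) (i : ι) :
    ⟪u i, Fintype.linearCombination ℝ u v⟫ =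
      (1 - a) * v i - t * Fintype.linearCombination ℝ (fun j => ‖y j‖ ^ 2) v := by
  classical
  obtain ⟨hvy, hv1⟩ := mem_affineRelations.mp hv
  have hterm : ∀ j, ⟪u i, v j • u j⟫ = (a - t * ‖y i‖ ^ 2) * v j + 2 * t * ⟪y i, v j • y j⟫
      - t * (v j • ‖y j‖ ^ 2) + if i = j then (1 - a) * v j else 0 := by
    intro j
    rw [real_inner_smul_right, real_inner_smul_right, smul_eq_mul]
    rcases eq_or_ne i j with rfl | hij
    · rw [real_inner_self_eq_norm_sq, hdiag, real_inner_self_eq_norm_sq, if_pos rfl]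
      ring
    · rw [hoff i j hij, norm_sub_sq_real, if_neg hij]
      ring
  rw [Fintype.linearCombination_apply, Fintype.linearCombination_apply, inner_sum]
  simp only [hterm, sum_add_distrib, sum_sub_distrib, ← mul_sum, sum_ite_eq, mem_univ, if_true]
  rw [← inner_sum, hvy, hv1, inner_zero_right]
  ring

theorem norm_linearCombination_sq_of_mem_affineRelations
    (hoff : ∀ i j, i ≠ j → ⟪u i, u j⟫ = a - t * ‖y i - y j‖ ^ 2) (hdiag : ∀ i, ‖u i‖ = 1)
    {v : ι → ℝ} (hv : v ∈ affineRelations y) :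
    ‖Fintype.linearCombination ℝ u v‖ ^ 2 = (1 - a) * (v ⬝ᵥ v) := by
  rw [← real_inner_self_eq_norm_sq]
  nth_rewrite 1 [Fintype.linearCombination_apply]
  simp only [sum_inner, real_inner_smul_left,
    inner_linearCombination_of_mem_affineRelations hoff hdiag hv, mul_sub, sum_sub_distrib,
    ← sum_mul, (mem_affineRelations.mp hv).2, zero_mul, sub_zero, dotProduct, mul_sum]
  exact sum_congr rfl fun i _ => by ring

theorem eq_one_of_finrank_add_finrank_lt_card [FiniteDimensional ℝ E] [FiniteDimensional ℝ F]
    (hoff : ∀ i j, i ≠ j → ⟪u i, u j⟫ = a - t * ‖y i - y j‖ ^ 2) (hdiag : ∀ i, ‖u i‖ = 1)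
    (hcard : finrank ℝ F + finrank ℝ E + 1 < Fintype.card ι) : a = 1 := by
  by_contra ha
  have hbot : ker (Fintype.linearCombination ℝ u) ⊓ affineRelations y = ⊥ := by
    refine (Submodule.eq_bot_iff _).mpr fun v ⟨hu, hv⟩ => ?_
    have hsq := norm_linearCombination_sq_of_mem_affineRelations hoff hdiag hv
    rw [mem_ker.mp hu, norm_zero, zero_pow two_ne_zero, eq_comm,
      mul_eq_zero, sub_eq_zero, eq_comm] at hsq
    exact dotProduct_self_eq_zero.mp (hsq.resolve_left ha)
  have := finrank_le_finrank_add_finrank_of_ker_inf_ker_eq_bot hbot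
  rw [finrank_prod, finrank_fintype_fun_eq_card, finrank_self] at this
  omega

theorem affineRelations_le_ker_of_gram [Nonempty ι] [FiniteDimensional ℝ E]
    [FiniteDimensional ℝ F]
    (hoff : ∀ i j, i ≠ j → ⟪u i, u j⟫ = a - t * ‖y i - y j‖ ^ 2) (hdiag : ∀ i, ‖u i‖ = 1)
    (ht : t ≠ 0) (hcard : finrank ℝ F + finrank ℝ E + 1 < Fintype.card ι) :
    affineRelations y ≤ ker (Fintype.linearCombination ℝ fun i => ‖y i‖ ^ 2) := by
  intro v hv
  have ha := eq_one_of_finrank_add_finrank_lt_card hoff hdiag hcard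
  have hzero : Fintype.linearCombination ℝ u v = 0 := by
    rw [← norm_eq_zero, ← sq_eq_zero_iff,
      norm_linearCombination_sq_of_mem_affineRelations hoff hdiag hv, ha, sub_self, zero_mul]
  have hrow := inner_linearCombination_of_mem_affineRelations hoff hdiag hv (Classical.arbitrary ι)
  rw [hzero, inner_zero_right, ha, sub_self, zero_mul, zero_sub, zero_eq_neg,
    mul_eq_zero] at hrow
  exact mem_ker.mpr (hrow.resolve_left ht)

end Gram

end AffineRelations

theorem cosSim_eq_inner_smul_inv_norm {q : ℕ} (u v : EuclideanSpace ℝ (Fin q)) :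
    cosSim u v = ⟪‖u‖⁻¹ • u, ‖v‖⁻¹ • v⟫ := by
  rw [cosSim, real_inner_smul_left, real_inner_smul_right]
  ring

theorem SCos_apply_comm {n q : ℕ} (τ : ℝ) (z : Fin n → EuclideanSpace ℝ (Fin q)) (i j : Fin n) :
    SCos τ z i j = SCos τ z j i := by
  simp only [SCos, Matrix.of_apply, cosSim, real_inner_comm, mul_comm]

theorem Wlabel_apply_comm {n l : ℕ} (y : Fin n → EuclideanSpace ℝ (Fin l)) (i j : Fin n) :
    Wlabel y i j = Wlabel y j i := by
  simp only [Wlabel, Matrix.of_apply, norm_sub_rev]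

theorem statement7_general {n q l : ℕ} (hn : 2 * q + 4 < n)
    (hlq : l ≤ q - 1) (τ : ℝ) (hτ : 0 < τ)
    (y : Fin n → EuclideanSpace ℝ (Fin l))
    (z : Fin n → EuclideanSpace ℝ (Fin q)) (hz : ∀ i, z i ≠ 0)
    (hopt : infoNCE (Wlabel y) (SCos τ z) = entropicBound (Wlabel y)) :
    ∃ (m : EuclideanSpace ℝ (Fin l)) (ρ : ℝ), 0 ≤ ρ ∧ ∀ i : Fin n, ‖y i - m‖ = ρ := by
  obtain ⟨c, hc⟩ := exists_forall_ne_eq_log_add_of_infoNCE_eq_entropicBound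
    (fun _ _ _ => exp_pos _) (Wlabel_apply_comm y) (SCos_apply_comm τ z) hopt
  let u i := ‖z i‖⁻¹ • z i
  have hunit : ∀ i, ‖u i‖ = 1 := fun i => by simpa using norm_smul_inv_norm (𝕜 := ℝ) (hz i)
  have hgram : ∀ i j, i ≠ j → ⟪u i, u j⟫ = τ * c - τ * ‖y i - y j‖ ^ 2 := fun i j hij => by
    have h := hc i j hij
    simp only [SCos, Matrix.of_apply, log_exp] at h
    rw [cosSim_eq_inner_smul_inv_norm, div_eq_iff hτ.ne'] at h
    rw [h]
    ring
  have : Nonempty (Fin n) := ⟨⟨0, by omega⟩⟩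
  exact exists_norm_sub_eq_of_affineRelations_le_ker <|
    affineRelations_le_ker_of_gram hgram hunit hτ.ne'
      (by simp only [finrank_euclideanSpace_fin, Fintype.card_fin]; omega)

/-- y-Aware: if some nonzero embedding attains the entropic lower
bound of the y-Aware loss, then the labels lie on a hypersphere. -/
theorem statement7 {n q l : ℕ} (hq : 2 ≤ q) (hn : 2 * q + 4 < n)
    (hl : 1 ≤ l) (hlq : l ≤ q - 1) (τ : ℝ) (hτ : 0 < τ)
    (y : Fin n → EuclideanSpace ℝ (Fin l))
    (z : Fin n → EuclideanSpace ℝ (Fin q)) (hz : ∀ i, z i ≠ 0)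
    (hopt : infoNCE (Wlabel y) (SCos τ z) = entropicBound (Wlabel y)) :
    ∃ (m : EuclideanSpace ℝ (Fin l)) (ρ : ℝ), 0 ≤ ρ ∧ ∀ i : Fin n, ‖y i - m‖ = ρ :=
  statement7_general hn hlq τ hτ y z hz hopt
end

section
/- Let W be a well-conditioned n×n matrix: symmetric, with w_{ij} ≥ 0 for all i ≠ j and Σ_{k≠i} w_{ik} > 0 for each i. Then H(W) ≤ L_W(S) for every symmetric n×n real matrix S; and if additionally w_{ij} = 0 for at least one pair i ≠ j, then the inequality is strict: H(W) < L_W(S) for every symmetric S. -/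
open scoped BigOperators

lemma gibbs_term_le {p q : ℝ} (hp : 0 ≤ p) (hq : 0 < q) :
    p * Real.log q - p * Real.log p ≤ q - p := by
  rcases eq_or_lt_of_le hp with h0 | h0
  · simp [← h0]; linarith
  · have h := Real.log_le_sub_one_of_pos (div_pos hq h0)
    rw [Real.log_div (ne_of_gt hq) (ne_of_gt h0)] at h
    have hqp : p * (q / p) = q := mul_div_cancel₀ q (ne_of_gt h0)
    nlinarith

lemma gibbs_le {ι : Type*} (s : Finset ι) (p q : ι → ℝ)
    (hp : ∀ j ∈ s, 0 ≤ p j) (hps : ∑ j ∈ s, p j = 1)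
    (hq : ∀ j ∈ s, 0 < q j) (hqs : ∑ j ∈ s, q j = 1) :
    ∑ j ∈ s, p j * Real.log (q j) ≤ ∑ j ∈ s, p j * Real.log (p j) := by
  have h : ∑ j ∈ s, (p j * Real.log (q j) - p j * Real.log (p j)) ≤
      ∑ j ∈ s, (q j - p j) :=
    Finset.sum_le_sum fun j hj => gibbs_term_le (hp j hj) (hq j hj)
  rw [Finset.sum_sub_distrib, Finset.sum_sub_distrib, hps, hqs] at h
  linarith

lemma gibbs_lt {ι : Type*} (s : Finset ι) (p q : ι → ℝ)
    (hp : ∀ j ∈ s, 0 ≤ p j) (hps : ∑ j ∈ s, p j = 1)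
    (hq : ∀ j ∈ s, 0 < q j) (hqs : ∑ j ∈ s, q j = 1)
    (j₀ : ι) (hj₀ : j₀ ∈ s) (hpz : p j₀ = 0) :
    ∑ j ∈ s, p j * Real.log (q j) < ∑ j ∈ s, p j * Real.log (p j) := by
  have h : ∑ j ∈ s, (p j * Real.log (q j) - p j * Real.log (p j)) <
      ∑ j ∈ s, (q j - p j) := by
    refine Finset.sum_lt_sum (fun j hj => gibbs_term_le (hp j hj) (hq j hj)) ⟨j₀, hj₀, ?_⟩
    simp only [hpz, zero_mul, sub_zero, sub_self]
    exact hq j₀ hj₀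
  rw [Finset.sum_sub_distrib, Finset.sum_sub_distrib, hps, hqs] at h
  linarith

lemma row_facts {n : ℕ} (W S : Matrix (Fin n) (Fin n) ℝ)
    (hWnn : ∀ i j : Fin n, i ≠ j → 0 ≤ W i j)
    (hWwc : ∀ i : Fin n, 0 < ∑ k ∈ Finset.univ.erase i, W i k) (i : Fin n) :
    (∀ j ∈ Finset.univ.erase i, 0 ≤ W i j / ∑ k ∈ Finset.univ.erase i, W i k) ∧
    (∑ j ∈ Finset.univ.erase i, W i j / ∑ k ∈ Finset.univ.erase i, W i k = 1) ∧
    (∀ j ∈ Finset.univ.erase i,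
      0 < Real.exp (S i j) / ∑ k ∈ Finset.univ.erase i, Real.exp (S i k)) ∧
    (∑ j ∈ Finset.univ.erase i,
      Real.exp (S i j) / ∑ k ∈ Finset.univ.erase i, Real.exp (S i k) = 1) := by
  have hT := hWwc i
  have hne : (Finset.univ.erase i).Nonempty :=
    Finset.nonempty_of_sum_ne_zero (f := fun k => W i k) hT.ne'
  have hE : 0 < ∑ k ∈ Finset.univ.erase i, Real.exp (S i k) :=
    Finset.sum_pos (fun k _ => Real.exp_pos _) hne
  refine ⟨fun j hj => div_nonneg (hWnn i j (Finset.ne_of_mem_erase hj).symm) hT.le, ?_,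
    fun j _ => div_pos (Real.exp_pos _) hE, ?_⟩
  · rw [← Finset.sum_div, div_self hT.ne']
  · rw [← Finset.sum_div, div_self hE.ne']

/-- the entropic lower bound holds for any well-conditioned weight
matrix, and is strict whenever `W` has an off-diagonal zero. -/
theorem statement9 {n : ℕ} (W : Matrix (Fin n) (Fin n) ℝ) (hWsymm : W.IsSymm)
    (hWnn : ∀ i j : Fin n, i ≠ j → 0 ≤ W i j)
    (hWwc : ∀ i : Fin n, 0 < ∑ k ∈ Finset.univ.erase i, W i k) :
    (∀ S : Matrix (Fin n) (Fin n) ℝ, S.IsSymm → entropicBound W ≤ infoNCE W S) ∧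
    ((∃ i j : Fin n, i ≠ j ∧ W i j = 0) →
      ∀ S : Matrix (Fin n) (Fin n) ℝ, S.IsSymm → entropicBound W < infoNCE W S) := by
  constructor
  · intro S _
    unfold entropicBound infoNCE
    rcases Nat.eq_zero_or_pos n with h | h
    · subst h; simp
    · have hsum : ∑ i : Fin n, ∑ j ∈ Finset.univ.erase i,
          (W i j / ∑ k ∈ Finset.univ.erase i, W i k) *
            Real.log (Real.exp (S i j) / ∑ k ∈ Finset.univ.erase i, Real.exp (S i k)) ≤
          ∑ i : Fin n, ∑ j ∈ Finset.univ.erase i,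
          (W i j / ∑ k ∈ Finset.univ.erase i, W i k) *
            Real.log (W i j / ∑ k ∈ Finset.univ.erase i, W i k) := by
        refine Finset.sum_le_sum fun i _ => ?_
        obtain ⟨hp, hps, hq, hqs⟩ := row_facts W S hWnn hWwc i
        exact gibbs_le _ _ _ hp hps hq hqs
      have hn : (0:ℝ) < 1 / n := by positivity
      nlinarith [mul_nonneg hn.le (sub_nonneg.mpr hsum)]
  · rintro ⟨i₀, j₀, hij, hz⟩ S _
    unfold entropicBound infoNCE
    have hsum : ∑ i : Fin n, ∑ j ∈ Finset.univ.erase i,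
          (W i j / ∑ k ∈ Finset.univ.erase i, W i k) *
            Real.log (Real.exp (S i j) / ∑ k ∈ Finset.univ.erase i, Real.exp (S i k)) <
          ∑ i : Fin n, ∑ j ∈ Finset.univ.erase i,
          (W i j / ∑ k ∈ Finset.univ.erase i, W i k) *
            Real.log (W i j / ∑ k ∈ Finset.univ.erase i, W i k) := by
      refine Finset.sum_lt_sum (fun i _ => ?_) ⟨i₀, Finset.mem_univ _, ?_⟩
      · obtain ⟨hp, hps, hq, hqs⟩ := row_facts W S hWnn hWwc i
        exact gibbs_le _ _ _ hp hps hq hqs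
      · obtain ⟨hp, hps, hq, hqs⟩ := row_facts W S hWnn hWwc i₀
        refine gibbs_lt _ _ _ hp hps hq hqs j₀
          (Finset.mem_erase.mpr ⟨hij.symm, Finset.mem_univ _⟩) ?_
        simp [hz]
    have hn : (0:ℝ) < 1 / n := by
      have := i₀.pos
      positivity
    nlinarith [mul_pos hn (sub_pos.mpr hsum)]
end
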